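/- arXiv:2303.02794 — 2 statements merged into one kernel-verified Lean document; each statement's English description precedes it below -/
import Mathlib

section
/- Let M ≥ 1, let f : ℝ^M → ℝ be K_f-Lipschitz with K_f ≥ 0, let x ∈ ℝ^M, take the reference vector x_r = 0, and let x̃ = m_{S̃}(x) be a perturbed instance of x for some subset S̃ ⊆ {1,…,M}. Assume min_{1≤i≤M} φ_i(x̃) ≥ 0. Then the explanation difference is bounded by the prediction difference: ‖Φ(x) − Φ(x̃)‖₂ ≤ (1 + √2·γ₀)·|f(x) − f(x̃)| + √M·γ₀, where γ₀ = K_f·‖x‖₂. -/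
/-- The masked instance `m_S(x)`: coordinate `j` equals `x j` if `j ∈ S`
and the reference value `xr j` otherwise. -/
noncomputable def mask {M : ℕ} (xr : EuclideanSpace ℝ (Fin M)) (S : Finset (Fin M))
    (x : EuclideanSpace ℝ (Fin M)) : EuclideanSpace ℝ (Fin M) :=
  WithLp.toLp 2 (fun j => if j ∈ S then x j else xr j)

/-- Attribution of feature `i` at `x`:
`φ_i(x) = 2^{-(M-1)} · Σ_{S ⊆ {1,…,M}\{i}} (f(m_{S∪{i}}(x)) − f(m_S(x)))`. -/
noncomputable def phi {M : ℕ} (xr : EuclideanSpace ℝ (Fin M))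
    (f : EuclideanSpace ℝ (Fin M) → ℝ) (i : Fin M) (x : EuclideanSpace ℝ (Fin M)) : ℝ :=
  ((2 : ℝ) ^ (M - 1))⁻¹ *
    ∑ S ∈ (Finset.univ.erase i).powerset, (f (mask xr (insert i S) x) - f (mask xr S x))

/-- The explanation vector `Φ(x) = (φ_1(x), …, φ_M(x))`. -/
noncomputable def Phi {M : ℕ} (xr : EuclideanSpace ℝ (Fin M))
    (f : EuclideanSpace ℝ (Fin M) → ℝ) (x : EuclideanSpace ℝ (Fin M)) :
    EuclideanSpace ℝ (Fin M) :=
  WithLp.toLp 2 (fun i => phi xr f i x)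

/-!
Every marginal contribution of feature `i` changes `f` by at most `K_f |x_i|`, by the Lipschitz
bound. Masking `x` to `x̃ = m_{S̃}(x)` kills all attributions of features outside `S̃`, and for
`i ∈ S̃` it leaves the marginal contribution of the empty coalition unchanged, so that
`|φ_i(x) - φ_i(x̃)| ≤ 2 (1 - 2^{-(M-1)}) K_f |x_i| ≤ √M K_f |x_i|`. Summing squares gives
`‖Φ(x) - Φ(x̃)‖₂ ≤ √M γ₀`, which is already stronger than the claim.
-/

open Finset

noncomputable def marginal {M : ℕ} (xr : EuclideanSpace ℝ (Fin M))
    (f : EuclideanSpace ℝ (Fin M) → ℝ) (i : Fin M) (S : Finset (Fin M))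
    (x : EuclideanSpace ℝ (Fin M)) : ℝ :=
  f (mask xr (insert i S) x) - f (mask xr S x)

lemma abs_sum_le_of_eq_zero {ι : Type*} [DecidableEq ι] {s : Finset ι} {g : ι → ℝ} {a : ι}
    {c : ℝ} (ha : a ∈ s) (hga : g a = 0) (hg : ∀ b ∈ s, |g b| ≤ c) :
    |∑ b ∈ s, g b| ≤ (#s - 1 : ℝ) * c := by
  rw [← sum_erase s hga]
  calc |∑ b ∈ s.erase a, g b| ≤ ∑ b ∈ s.erase a, |g b| := abs_sum_le_sum_abs _ _
    _ ≤ #(s.erase a) • c := sum_le_card_nsmul _ _ _ fun b hb => hg b (mem_of_mem_erase hb)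
    _ = (#s - 1 : ℝ) * c := by
      rw [nsmul_eq_mul, card_erase_of_mem ha, Nat.cast_pred (card_pos.mpr ⟨a, ha⟩)]

lemma two_mul_one_sub_inv_two_pow_le_sqrt {M : ℕ} (hM : 1 ≤ M) :
    2 * (1 - ((2 : ℝ) ^ (M - 1))⁻¹) ≤ √M := by
  obtain ⟨n, rfl⟩ := Nat.exists_eq_add_of_le' hM
  rw [Nat.add_sub_cancel, Nat.cast_add_one]
  apply Real.le_sqrt_of_sq_le
  match n with
  | 0 | 1 | 2 => norm_num
  | n + 3 =>
    have : (0 : ℝ) ≤ ((2 : ℝ) ^ (n + 3))⁻¹ := by positivity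
    have : ((2 : ℝ) ^ (n + 3))⁻¹ ≤ 1 := inv_le_one_of_one_le₀ (one_le_pow₀ (by norm_num))
    push_cast
    nlinarith

lemma norm_le_mul_norm_of_forall_abs_le {ι : Type*} [Fintype ι] {u x : EuclideanSpace ℝ ι}
    {c : ℝ} (hc : 0 ≤ c) (h : ∀ i, |u i| ≤ c * |x i|) : ‖u‖ ≤ c * ‖x‖ := by
  have hsq : ∀ i, ‖u i‖ ^ 2 ≤ ‖(c • x) i‖ ^ 2 := fun i => by
    rw [PiLp.smul_apply, norm_smul, Real.norm_of_nonneg hc]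
    exact pow_le_pow_left₀ (norm_nonneg _) (h i) 2
  calc ‖u‖ ≤ ‖c • x‖ := by
        rw [EuclideanSpace.norm_eq, EuclideanSpace.norm_eq]
        exact Real.sqrt_le_sqrt (sum_le_sum fun i _ => hsq i)
    _ = c * ‖x‖ := by rw [norm_smul, Real.norm_of_nonneg hc]

section Masking

variable {M : ℕ} (xr : EuclideanSpace ℝ (Fin M))

lemma mask_mask (S T : Finset (Fin M)) (x : EuclideanSpace ℝ (Fin M)) :
    mask xr S (mask xr T x) = mask xr (S ∩ T) x := by
  ext j
  by_cases hS : j ∈ S <;> by_cases hT : j ∈ T <;> simp [mask, hS, hT]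

lemma mask_insert_sub_mask {i : Fin M} {S : Finset (Fin M)} (hi : i ∉ S)
    (x : EuclideanSpace ℝ (Fin M)) :
    mask xr (insert i S) x - mask xr S x = EuclideanSpace.single i (x i - xr i) := by
  ext j
  by_cases hj : j = i
  · subst hj; simp [mask, hi]
  · by_cases hS : j ∈ S <;> simp [mask, hj, hS]

variable {f : EuclideanSpace ℝ (Fin M) → ℝ} {Kf : ℝ}

lemma abs_marginal_le (hf : ∀ u v : EuclideanSpace ℝ (Fin M), |f u - f v| ≤ Kf * ‖u - v‖)
    {i : Fin M} {S : Finset (Fin M)} (hi : i ∉ S) (x : EuclideanSpace ℝ (Fin M)) :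
    |marginal xr f i S x| ≤ Kf * |x i - xr i| := by
  calc |marginal xr f i S x| ≤ Kf * ‖mask xr (insert i S) x - mask xr S x‖ := hf _ _
    _ = Kf * |x i - xr i| := by
      rw [mask_insert_sub_mask xr hi, PiLp.norm_single, Real.norm_eq_abs]

lemma marginal_mask_of_notMem {i : Fin M} {T : Finset (Fin M)} (hi : i ∉ T)
    (S : Finset (Fin M)) (x : EuclideanSpace ℝ (Fin M)) :
    marginal xr f i S (mask xr T x) = 0 := by
  rw [marginal, mask_mask, mask_mask, insert_inter_of_notMem hi, sub_self]

lemma marginal_mask_of_mem {i : Fin M} {T : Finset (Fin M)} (hi : i ∈ T)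
    (S : Finset (Fin M)) (x : EuclideanSpace ℝ (Fin M)) :
    marginal xr f i S (mask xr T x) = marginal xr f i (S ∩ T) x := by
  rw [marginal, marginal, mask_mask, mask_mask, insert_inter_of_mem hi]

end Masking

section Attribution

variable {M : ℕ} (xr : EuclideanSpace ℝ (Fin M)) {f : EuclideanSpace ℝ (Fin M) → ℝ}
  {Kf : ℝ}

lemma phi_eq_average (i : Fin M) (x : EuclideanSpace ℝ (Fin M)) :
    phi xr f i x = ((2 : ℝ) ^ (M - 1))⁻¹ *
      ∑ S ∈ (univ.erase i).powerset, marginal xr f i S x := rfl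

lemma card_powerset_erase (i : Fin M) : (#(univ.erase i).powerset : ℝ) = 2 ^ (M - 1) := by
  rw [card_powerset, card_erase_of_mem (mem_univ i), card_univ, Fintype.card_fin]
  push_cast; rfl

lemma notMem_of_mem_powerset_erase {i : Fin M} {S : Finset (Fin M)}
    (hS : S ∈ (univ.erase i).powerset) : i ∉ S :=
  fun h => notMem_erase i univ (mem_powerset.mp hS h)

lemma abs_phi_le (hf : ∀ u v : EuclideanSpace ℝ (Fin M), |f u - f v| ≤ Kf * ‖u - v‖)
    (i : Fin M) (x : EuclideanSpace ℝ (Fin M)) :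
    |phi xr f i x| ≤ Kf * |x i - xr i| := by
  have hsum : |∑ S ∈ (univ.erase i).powerset, marginal xr f i S x|
      ≤ 2 ^ (M - 1) * (Kf * |x i - xr i|) := by
    refine (abs_sum_le_sum_abs _ _).trans ?_
    refine (sum_le_card_nsmul _ _ (Kf * |x i - xr i|) fun S hS => ?_).trans_eq ?_
    · exact abs_marginal_le xr hf (notMem_of_mem_powerset_erase hS) x
    · rw [nsmul_eq_mul, card_powerset_erase]
  rw [phi_eq_average, abs_mul, abs_of_pos (by positivity), inv_mul_le_iff₀ (by positivity)]
  exact hsum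

lemma phi_mask_of_notMem {i : Fin M} {T : Finset (Fin M)} (hi : i ∉ T)
    (x : EuclideanSpace ℝ (Fin M)) : phi xr f i (mask xr T x) = 0 := by
  simp [phi_eq_average, marginal_mask_of_notMem xr hi]

lemma abs_phi_sub_phi_mask_of_mem
    (hf : ∀ u v : EuclideanSpace ℝ (Fin M), |f u - f v| ≤ Kf * ‖u - v‖)
    {i : Fin M} {T : Finset (Fin M)} (hi : i ∈ T) (x : EuclideanSpace ℝ (Fin M)) :
    |phi xr f i x - phi xr f i (mask xr T x)|
      ≤ 2 * (1 - ((2 : ℝ) ^ (M - 1))⁻¹) * (Kf * |x i - xr i|) := by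
  have hterm : ∀ S ∈ (univ.erase i).powerset,
      |marginal xr f i S x - marginal xr f i (S ∩ T) x| ≤ 2 * (Kf * |x i - xr i|) := by
    intro S hS
    have hiS := notMem_of_mem_powerset_erase hS
    calc _ ≤ |marginal xr f i S x| + |marginal xr f i (S ∩ T) x| := abs_sub _ _
      _ ≤ Kf * |x i - xr i| + Kf * |x i - xr i| :=
          add_le_add (abs_marginal_le xr hf hiS x)
            (abs_marginal_le xr hf (fun h => hiS (mem_inter.mp h).1) x)
      _ = 2 * (Kf * |x i - xr i|) := by ring
  -- the coalition `S = ∅` contributes the same marginal at `x` and at its masking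
  have hsum := abs_sum_le_of_eq_zero (empty_mem_powerset _)
    (by rw [empty_inter, sub_self]) hterm
  rw [card_powerset_erase] at hsum
  rw [phi_eq_average, phi_eq_average, ← mul_sub, ← sum_sub_distrib, abs_mul,
    abs_of_pos (by positivity)]
  simp_rw [marginal_mask_of_mem xr hi]
  calc _ ≤ ((2 : ℝ) ^ (M - 1))⁻¹ * ((2 ^ (M - 1) - 1) * (2 * (Kf * |x i - xr i|))) :=
        mul_le_mul_of_nonneg_left hsum (by positivity)
    _ = _ := by field_simp

lemma abs_phi_sub_phi_mask_le
    (hf : ∀ u v : EuclideanSpace ℝ (Fin M), |f u - f v| ≤ Kf * ‖u - v‖) (hKf : 0 ≤ Kf)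
    (T : Finset (Fin M)) (i : Fin M) (x : EuclideanSpace ℝ (Fin M)) :
    |phi xr f i x - phi xr f i (mask xr T x)| ≤ √M * (Kf * |x i - xr i|) := by
  have hM : 1 ≤ M := Nat.one_le_of_lt i.isLt
  have hγ : 0 ≤ Kf * |x i - xr i| := by positivity
  by_cases hi : i ∈ T
  · exact (abs_phi_sub_phi_mask_of_mem xr hf hi x).trans
      (mul_le_mul_of_nonneg_right (two_mul_one_sub_inv_two_pow_le_sqrt hM) hγ)
  · rw [phi_mask_of_notMem xr hi, sub_zero]
    refine (abs_phi_le xr hf i x).trans (le_mul_of_one_le_left hγ ?_)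
    exact Real.one_le_sqrt.mpr (by exact_mod_cast hM)

lemma norm_Phi_sub_Phi_mask_le
    (hf : ∀ u v : EuclideanSpace ℝ (Fin M), |f u - f v| ≤ Kf * ‖u - v‖) (hKf : 0 ≤ Kf)
    (T : Finset (Fin M)) (x : EuclideanSpace ℝ (Fin M)) :
    ‖Phi xr f x - Phi xr f (mask xr T x)‖ ≤ √M * (Kf * ‖x - xr‖) := by
  rw [← mul_assoc]
  refine norm_le_mul_norm_of_forall_abs_le (by positivity) fun i => ?_
  rw [mul_assoc]
  exact abs_phi_sub_phi_mask_le xr hf hKf T i x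

end Attribution

theorem compact_alignment_general {M : ℕ}
    (f : EuclideanSpace ℝ (Fin M) → ℝ) (Kf : ℝ) (hKf : 0 ≤ Kf)
    (hf : ∀ u v : EuclideanSpace ℝ (Fin M), |f u - f v| ≤ Kf * ‖u - v‖)
    (x : EuclideanSpace ℝ (Fin M)) (St : Finset (Fin M))
    (xt : EuclideanSpace ℝ (Fin M)) (hxt : xt = mask (0 : EuclideanSpace ℝ (Fin M)) St x) :
    ‖Phi (0 : EuclideanSpace ℝ (Fin M)) f x - Phi (0 : EuclideanSpace ℝ (Fin M)) f xt‖ ≤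
      (1 + Real.sqrt 2 * (Kf * ‖x‖)) * |f x - f xt| + Real.sqrt M * (Kf * ‖x‖) := by
  subst hxt
  have hbound := norm_Phi_sub_Phi_mask_le 0 hf hKf St x
  rw [sub_zero] at hbound
  have : 0 ≤ (1 + √2 * (Kf * ‖x‖)) * |f x - f (mask 0 St x)| := by positivity
  linarith

/-- **Theorem 1 (Compact Alignment).** With reference vector `x_r = 0`, for a
`K_f`-Lipschitz model `f` and a perturbed instance `xt = m_{St}(x)` whose attributions
are all nonnegative, the explanation difference is bounded by the prediction difference:
`‖Φ(x) − Φ(xt)‖₂ ≤ (1 + √2·γ₀)·|f(x) − f(xt)| + √M·γ₀` where `γ₀ = K_f‖x‖₂`. -/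
theorem compact_alignment {M : ℕ} (hM : 1 ≤ M)
    (f : EuclideanSpace ℝ (Fin M) → ℝ) (Kf : ℝ) (hKf : 0 ≤ Kf)
    (hf : ∀ u v : EuclideanSpace ℝ (Fin M), |f u - f v| ≤ Kf * ‖u - v‖)
    (x : EuclideanSpace ℝ (Fin M)) (St : Finset (Fin M))
    (xt : EuclideanSpace ℝ (Fin M)) (hxt : xt = mask (0 : EuclideanSpace ℝ (Fin M)) St x)
    (hpos : ∀ i : Fin M, 0 ≤ phi (0 : EuclideanSpace ℝ (Fin M)) f i xt) :
    ‖Phi (0 : EuclideanSpace ℝ (Fin M)) f x - Phi (0 : EuclideanSpace ℝ (Fin M)) f xt‖ ≤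
      (1 + Real.sqrt 2 * (Kf * ‖x‖)) * |f x - f xt| + Real.sqrt M * (Kf * ‖x‖) :=
  compact_alignment_general f Kf hKf hf x St xt hxt
end

section
/- Let M ≥ 1, let f : ℝ^M → ℝ be K_f-Lipschitz with K_f ≥ 0, let x ∈ ℝ^M, take the reference vector x_r = 0, and let x̃ = m_{S̃}(x) for a subset S̃ ⊆ {1,…,M}. For each feature index i ∈ {1,…,M}, define δ_i = 2^{-(M-1)} · Σ_{S ⊆ {1,…,M}\{i}} |f(m_{S∪{i}}(x)) − f(m_{S∪{i}}(x̃))|. Then the per-feature explanation difference satisfies |φ_i(x) − φ_i(x̃)| ≤ δ_i + K_f · ‖x‖₂ for every i ∈ {1,…,M}. -/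
/-!
Write `φ_i(x) − φ_i(x̃)` as the average over `S` of
`(f(m_{S∪{i}}(x)) − f(m_{S∪{i}}(x̃))) − (f(m_S(x)) − f(m_S(x̃)))`. The first terms average to
`δ_i`; each second term is at most `K_f ‖m_S(x) − m_S(x̃)‖ ≤ K_f ‖x − x̃‖ ≤ K_f ‖x‖`, since masking
with a common reference is `1`-Lipschitz and `x − m_{S̃}(x)` keeps only some coordinates of `x`.
-/

open Finset

section Masking

variable {M : ℕ}

theorem norm_le_norm_of_forall_abs_apply_le {u v : EuclideanSpace ℝ (Fin M)}
    (h : ∀ j, |u j| ≤ |v j|) : ‖u‖ ≤ ‖v‖ := by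
  rw [EuclideanSpace.norm_eq, EuclideanSpace.norm_eq]
  gcongr with j
  simpa only [Real.norm_eq_abs] using h j

theorem norm_mask_sub_mask_le (xr : EuclideanSpace ℝ (Fin M)) (S : Finset (Fin M))
    (x y : EuclideanSpace ℝ (Fin M)) : ‖mask xr S x - mask xr S y‖ ≤ ‖x - y‖ := by
  refine norm_le_norm_of_forall_abs_apply_le fun j => ?_
  simp only [mask, PiLp.sub_apply]
  split_ifs <;> simp

theorem norm_sub_mask_le (xr : EuclideanSpace ℝ (Fin M)) (S : Finset (Fin M))
    (x : EuclideanSpace ℝ (Fin M)) : ‖x - mask xr S x‖ ≤ ‖x - xr‖ := by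
  refine norm_le_norm_of_forall_abs_apply_le fun j => ?_
  simp only [mask, PiLp.sub_apply]
  split_ifs <;> simp

end Masking

section Attribution

variable {M : ℕ} (i : Fin M)

theorem inv_two_pow_mul_sum_powerset_erase_const (a : ℝ) :
    ((2 : ℝ) ^ (M - 1))⁻¹ * ∑ _S ∈ (univ.erase i).powerset, a = a := by
  rw [sum_const, card_powerset, card_erase_of_mem (mem_univ i), card_univ, Fintype.card_fin,
    nsmul_eq_mul, Nat.cast_pow, Nat.cast_ofNat, inv_mul_cancel_left₀ (by positivity)]

theorem phi_sub_phi (xr : EuclideanSpace ℝ (Fin M)) (f : EuclideanSpace ℝ (Fin M) → ℝ)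
    (x y : EuclideanSpace ℝ (Fin M)) :
    phi xr f i x - phi xr f i y = ((2 : ℝ) ^ (M - 1))⁻¹ *
      ∑ S ∈ (univ.erase i).powerset,
        ((f (mask xr (insert i S) x) - f (mask xr (insert i S) y))
          - (f (mask xr S x) - f (mask xr S y))) := by
  rw [phi, phi, ← mul_sub, ← sum_sub_distrib]
  congr 1
  exact sum_congr rfl fun S _ => by ring

theorem abs_phi_sub_phi_le (xr : EuclideanSpace ℝ (Fin M)) (f : EuclideanSpace ℝ (Fin M) → ℝ)
    (Kf : ℝ) (hKf : 0 ≤ Kf)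
    (hf : ∀ u v : EuclideanSpace ℝ (Fin M), |f u - f v| ≤ Kf * ‖u - v‖)
    (x y : EuclideanSpace ℝ (Fin M)) :
    |phi xr f i x - phi xr f i y| ≤
      ((2 : ℝ) ^ (M - 1))⁻¹ * ∑ S ∈ (univ.erase i).powerset,
          |f (mask xr (insert i S) x) - f (mask xr (insert i S) y)|
        + Kf * ‖x - y‖ := by
  set c : ℝ := ((2 : ℝ) ^ (M - 1))⁻¹
  set P := (univ.erase i).powerset
  have hc : 0 ≤ c := by positivity
  have hmask : ∀ S, |f (mask xr S x) - f (mask xr S y)| ≤ Kf * ‖x - y‖ := fun S =>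
    (hf _ _).trans (mul_le_mul_of_nonneg_left (norm_mask_sub_mask_le xr S x y) hKf)
  calc |phi xr f i x - phi xr f i y|
      ≤ c * ∑ S ∈ P, (|f (mask xr (insert i S) x) - f (mask xr (insert i S) y)|
          + |f (mask xr S x) - f (mask xr S y)|) := by
        rw [phi_sub_phi, abs_mul, abs_of_nonneg hc]
        gcongr
        exact (abs_sum_le_sum_abs _ _).trans (sum_le_sum fun S _ => abs_sub _ _)
    _ ≤ c * ∑ S ∈ P, (|f (mask xr (insert i S) x) - f (mask xr (insert i S) y)|
          + Kf * ‖x - y‖) := by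
        gcongr with S
        exact hmask S
    _ = c * ∑ S ∈ P, |f (mask xr (insert i S) x) - f (mask xr (insert i S) y)|
          + Kf * ‖x - y‖ := by
        rw [sum_add_distrib, mul_add, inv_two_pow_mul_sum_powerset_erase_const]

end Attribution

theorem per_feature_delta_bound_general {M : ℕ}
    (f : EuclideanSpace ℝ (Fin M) → ℝ) (Kf : ℝ) (hKf : 0 ≤ Kf)
    (hf : ∀ u v : EuclideanSpace ℝ (Fin M), |f u - f v| ≤ Kf * ‖u - v‖)
    (x : EuclideanSpace ℝ (Fin M)) (St : Finset (Fin M))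
    (xt : EuclideanSpace ℝ (Fin M)) (hxt : xt = mask (0 : EuclideanSpace ℝ (Fin M)) St x)
    (δ : Fin M → ℝ)
    (hδ : ∀ i : Fin M, δ i = ((2 : ℝ) ^ (M - 1))⁻¹ *
        ∑ S ∈ (Finset.univ.erase i).powerset,
          |f (mask (0 : EuclideanSpace ℝ (Fin M)) (insert i S) x)
            - f (mask (0 : EuclideanSpace ℝ (Fin M)) (insert i S) xt)|) :
    ∀ i : Fin M,
      |phi (0 : EuclideanSpace ℝ (Fin M)) f i x - phi (0 : EuclideanSpace ℝ (Fin M)) f i xt| ≤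
        δ i + Kf * ‖x‖ := by
  intro i
  have hdist : ‖x - xt‖ ≤ ‖x‖ := by
    simpa only [hxt, sub_zero] using norm_sub_mask_le 0 St x
  calc |phi 0 f i x - phi 0 f i xt| ≤ δ i + Kf * ‖x - xt‖ := by
        simpa only [hδ i] using abs_phi_sub_phi_le i 0 f Kf hKf hf x xt
    _ ≤ δ i + Kf * ‖x‖ := by gcongr

/-- **Per-feature bound (Eq. A.4).** With reference vector `x_r = 0`, a `K_f`-Lipschitz
model `f`, a perturbed instance `x̃ = m_{S̃}(x)`, and
`δ_i = 2^{-(M-1)} · Σ_{S ⊆ {1,…,M}\{i}} |f(m_{S∪{i}}(x)) − f(m_{S∪{i}}(x̃))|`,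
one has `|φ_i(x) − φ_i(x̃)| ≤ δ_i + K_f·‖x‖₂` for every feature `i`. -/
theorem per_feature_delta_bound {M : ℕ} (hM : 1 ≤ M)
    (f : EuclideanSpace ℝ (Fin M) → ℝ) (Kf : ℝ) (hKf : 0 ≤ Kf)
    (hf : ∀ u v : EuclideanSpace ℝ (Fin M), |f u - f v| ≤ Kf * ‖u - v‖)
    (x : EuclideanSpace ℝ (Fin M)) (St : Finset (Fin M))
    (xt : EuclideanSpace ℝ (Fin M)) (hxt : xt = mask (0 : EuclideanSpace ℝ (Fin M)) St x)
    (δ : Fin M → ℝ)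
    (hδ : ∀ i : Fin M, δ i = ((2 : ℝ) ^ (M - 1))⁻¹ *
        ∑ S ∈ (Finset.univ.erase i).powerset,
          |f (mask (0 : EuclideanSpace ℝ (Fin M)) (insert i S) x)
            - f (mask (0 : EuclideanSpace ℝ (Fin M)) (insert i S) xt)|) :
    ∀ i : Fin M,
      |phi (0 : EuclideanSpace ℝ (Fin M)) f i x - phi (0 : EuclideanSpace ℝ (Fin M)) f i xt| ≤
        δ i + Kf * ‖x‖ :=
  per_feature_delta_bound_general f Kf hKf hf x St xt hxt δ hδ
end
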